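/- Let ζ > 0 and let (μ, φ₁) and (μ, φ₂) be eigenpairs of the beam problem with the same eigenvalue μ. Then φ₁ and φ₂ are linearly dependent on [0,1]: the function φ(x) = φ₁‴(0) φ₂(x) − φ₂‴(0) φ₁(x) vanishes identically on [0,1]. Hence every eigenvalue of the beam problem is geometrically simple. -/

import Mathlib

/-!
Two first integrals of the equation `f⁗ - ζ f⁽⁶⁾ = μ f` carry the argument: the energy identity
`∫ (f''² + ζ f'''² - μ f²) = 0`, which forces `μ > 0`, and a conserved bilinear form giving
`ζ f'''(0) g'''(0) = μ f(1) g(1) - f''(1) g''(1)` for any two solutions. The combination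
`ψ = φ₁'''(0) φ₂ - φ₂'''(0) φ₁` has `ψ'''(0) = 0`, so `(ψ(1), ψ''(1))` is isotropic for the
indefinite form `μ a a' - b b'`. If `ψ(1) = 0`, then `ψ''(1) = 0` as well and a Pohozaev identity
(multiplier `x ψ'`) makes `ψ` vanish. Otherwise `(φ₁(1), φ₁''(1))` and `(φ₂(1), φ₂''(1))` are
orthogonal to this isotropic vector, hence isotropic too, so `φ₁'''(0) = φ₂'''(0) = 0` and
`ψ = 0`, a contradiction.
-/

open Set MeasureTheory intervalIntegral

/-- `Dv m f x` is the `m`-th derivative of `f` on the interval `[0,1]`. -/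
noncomputable def Dv (m : ℕ) (f : ℝ → ℝ) (x : ℝ) : ℝ :=
  iteratedDerivWithin m f (Icc (0:ℝ) 1) x

def BeamBC (ζ : ℝ) (f : ℝ → ℝ) : Prop :=
  f 0 = 0 ∧ Dv 1 f 0 = 0 ∧ Dv 2 f 0 = 0 ∧
  Dv 2 f 1 - ζ * Dv 4 f 1 = 0 ∧
  ζ * Dv 5 f 1 - Dv 3 f 1 = 0 ∧
  ζ * Dv 3 f 1 = 0

def BeamEigenpair (ζ μ : ℝ) (φ : ℝ → ℝ) : Prop :=
  ContDiffOn ℝ 6 φ (Icc (0:ℝ) 1) ∧ BeamBC ζ φ ∧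
  (¬ ∀ x ∈ Icc (0:ℝ) 1, φ x = 0) ∧
  (∀ x ∈ Icc (0:ℝ) 1, Dv 4 φ x - ζ * Dv 6 φ x = μ * φ x)

theorem integral_eq_sub_of_hasDerivWithinAt_Icc {F G : ℝ → ℝ} {a b : ℝ} (hab : a ≤ b)
    (hF : ∀ x ∈ Icc a b, HasDerivWithinAt F (G x) (Icc a b) x)
    (hG : ContinuousOn G (Icc a b)) :
    ∫ x in a..b, G x = F b - F a :=
  integral_eq_sub_of_hasDerivAt_of_le hab (fun x hx => (hF x hx).continuousWithinAt)
    (fun x hx => (hF x (Ioo_subset_Icc_self hx)).hasDerivAt (Icc_mem_nhds hx.1 hx.2))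
    (hG.intervalIntegrable_of_Icc hab)

theorem eq_zero_of_integral_eq_zero_of_nonneg {g : ℝ → ℝ} {a b : ℝ} (hab : a < b)
    (hg : ContinuousOn g (Icc a b)) (hnn : ∀ x ∈ Icc a b, 0 ≤ g x)
    (hz : ∫ x in a..b, g x = 0) {x : ℝ} (hx : x ∈ Icc a b) : g x = 0 := by
  by_contra hne
  have hpos := integral_lt_integral_of_continuousOn_of_le_of_exists_lt hab continuousOn_const hg
    (fun y hy => hnn y (Ioc_subset_Icc_self hy)) ⟨x, hx, (hnn x hx).lt_of_ne' hne⟩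
  simp [hz] at hpos

section Dv

variable {n : WithTop ℕ∞} {m : ℕ} {f g : ℝ → ℝ} {x : ℝ}

theorem Dv_zero (f : ℝ → ℝ) : Dv 0 f = f := iteratedDerivWithin_zero

theorem Dv_succ (m : ℕ) (f : ℝ → ℝ) : Dv (m + 1) f = derivWithin (Dv m f) (Icc 0 1) :=
  iteratedDerivWithin_succ

theorem continuousOn_Dv (hf : ContDiffOn ℝ n f (Icc 0 1)) (hm : (m : WithTop ℕ∞) ≤ n) :
    ContinuousOn (Dv m f) (Icc 0 1) :=
  hf.continuousOn_iteratedDerivWithin hm (uniqueDiffOn_Icc one_pos)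

theorem differentiableOn_Dv (hf : ContDiffOn ℝ n f (Icc 0 1)) (hm : (m : WithTop ℕ∞) < n) :
    DifferentiableOn ℝ (Dv m f) (Icc 0 1) :=
  hf.differentiableOn_iteratedDerivWithin hm (uniqueDiffOn_Icc one_pos)

theorem hasDerivWithinAt_Dv (hf : ContDiffOn ℝ n f (Icc 0 1)) (hm : (m : WithTop ℕ∞) < n)
    (hx : x ∈ Icc (0:ℝ) 1) : HasDerivWithinAt (Dv m f) (Dv (m + 1) f x) (Icc 0 1) x := by
  rw [Dv_succ]
  exact (differentiableOn_Dv hf hm x hx).hasDerivWithinAt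

theorem Dv_linearCombination (hf : ContDiffOn ℝ m f (Icc 0 1)) (hg : ContDiffOn ℝ m g (Icc 0 1))
    (a b : ℝ) (hx : x ∈ Icc (0:ℝ) 1) :
    Dv m (fun t => a * f t + b * g t) x = a * Dv m f x + b * Dv m g x := by
  simp only [Dv]
  rw [iteratedDerivWithin_fun_add hx (uniqueDiffOn_Icc one_pos)
    ((contDiffOn_const.mul hf) x hx) ((contDiffOn_const.mul hg) x hx),
    iteratedDerivWithin_const_mul_field, iteratedDerivWithin_const_mul_field]

theorem Dv_eqOn_zero_of_succ (hf : ContDiffOn ℝ n f (Icc 0 1)) (hm : (m : WithTop ℕ∞) < n)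
    (h0 : Dv m f 0 = 0) (h : EqOn (Dv (m + 1) f) 0 (Icc 0 1)) :
    EqOn (Dv m f) 0 (Icc 0 1) := fun x hx => by
  rw [constant_of_derivWithin_zero (differentiableOn_Dv hf hm)
    (fun y hy => by rw [← Dv_succ]; exact h (Ico_subset_Icc_self hy)) x hx, h0, Pi.zero_apply]

end Dv

structure IsBeamSol (ζ μ : ℝ) (f : ℝ → ℝ) : Prop where
  contDiffOn : ContDiffOn ℝ 6 f (Icc 0 1)
  ode : ∀ x ∈ Icc (0:ℝ) 1, Dv 4 f x - ζ * Dv 6 f x = μ * f x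
  zero_left : f 0 = 0
  Dv1_zero_left : Dv 1 f 0 = 0
  Dv2_zero_left : Dv 2 f 0 = 0
  Dv3_one_right : Dv 3 f 1 = 0
  Dv5_one_right : Dv 5 f 1 = 0
  Dv2_one_right : Dv 2 f 1 = ζ * Dv 4 f 1

theorem BeamEigenpair.isBeamSol {ζ μ : ℝ} {φ : ℝ → ℝ} (hζ : ζ ≠ 0) (h : BeamEigenpair ζ μ φ) :
    IsBeamSol ζ μ φ := by
  obtain ⟨hs, ⟨h00, h10, h20, h41, h51, h31⟩, -, hode⟩ := h
  have h31' : Dv 3 φ 1 = 0 := (mul_eq_zero.mp h31).resolve_left hζ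
  refine ⟨hs, hode, h00, h10, h20, h31', ?_, by linarith⟩
  rw [h31', sub_zero] at h51
  exact (mul_eq_zero.mp h51).resolve_left hζ

namespace IsBeamSol

variable {ζ μ : ℝ} {f g : ℝ → ℝ}

theorem hasDerivWithinAt (h : IsBeamSol ζ μ f) {x : ℝ} (hx : x ∈ Icc (0:ℝ) 1) (m : ℕ)
    (hm : m < 6 := by norm_num) : HasDerivWithinAt (Dv m f) (Dv (m + 1) f x) (Icc 0 1) x :=
  hasDerivWithinAt_Dv h.contDiffOn (by exact_mod_cast hm) hx

theorem hasDerivWithinAt_self (h : IsBeamSol ζ μ f) {x : ℝ} (hx : x ∈ Icc (0:ℝ) 1) :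
    HasDerivWithinAt f (Dv 1 f x) (Icc 0 1) x := by
  simpa only [Dv_zero] using h.hasDerivWithinAt hx 0

theorem continuousOn (h : IsBeamSol ζ μ f) (m : ℕ) (hm : m ≤ 6 := by norm_num) :
    ContinuousOn (Dv m f) (Icc 0 1) :=
  continuousOn_Dv h.contDiffOn (by exact_mod_cast hm)

theorem linearCombination (hf : IsBeamSol ζ μ f) (hg : IsBeamSol ζ μ g) (a b : ℝ) :
    IsBeamSol ζ μ (fun t => a * f t + b * g t) := by
  have hD : ∀ m ≤ 6, ∀ x ∈ Icc (0:ℝ) 1,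
      Dv m (fun t => a * f t + b * g t) x = a * Dv m f x + b * Dv m g x := fun m hm x hx =>
    Dv_linearCombination (hf.contDiffOn.of_le (by exact_mod_cast hm))
      (hg.contDiffOn.of_le (by exact_mod_cast hm)) a b hx
  have h0 : (0:ℝ) ∈ Icc (0:ℝ) 1 := left_mem_Icc.mpr zero_le_one
  have h1 : (1:ℝ) ∈ Icc (0:ℝ) 1 := right_mem_Icc.mpr zero_le_one
  refine ⟨(contDiffOn_const.mul hf.contDiffOn).add (contDiffOn_const.mul hg.contDiffOn),
    fun x hx => ?_, ?_, ?_, ?_, ?_, ?_, ?_⟩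
  · rw [hD 4 (by norm_num) x hx, hD 6 (by norm_num) x hx]
    linear_combination a * hf.ode x hx + b * hg.ode x hx
  · simp [hf.zero_left, hg.zero_left]
  · simp [hD 1 (by norm_num) 0 h0, hf.Dv1_zero_left, hg.Dv1_zero_left]
  · simp [hD 2 (by norm_num) 0 h0, hf.Dv2_zero_left, hg.Dv2_zero_left]
  · simp [hD 3 (by norm_num) 1 h1, hf.Dv3_one_right, hg.Dv3_one_right]
  · simp [hD 5 (by norm_num) 1 h1, hf.Dv5_one_right, hg.Dv5_one_right]
  · rw [hD 2 (by norm_num) 1 h1, hD 4 (by norm_num) 1 h1, hf.Dv2_one_right, hg.Dv2_one_right]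
    ring

theorem eqOn_zero_of_Dv2 (h : IsBeamSol ζ μ f) (h2 : EqOn (Dv 2 f) 0 (Icc 0 1)) :
    EqOn f 0 (Icc 0 1) := by
  have h1 := Dv_eqOn_zero_of_succ h.contDiffOn (by norm_num) h.Dv1_zero_left h2
  simpa only [Dv_zero] using
    Dv_eqOn_zero_of_succ h.contDiffOn (m := 0) (by norm_num) (by rw [Dv_zero]; exact h.zero_left) h1

/-- Multiply the equation by `f` and integrate by parts. -/
theorem integral_energy (h : IsBeamSol ζ μ f) :
    ∫ x in (0:ℝ)..1, (Dv 2 f x ^ 2 + ζ * Dv 3 f x ^ 2 - μ * f x ^ 2) = 0 := by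
  have c0 := h.contDiffOn.continuousOn
  have c2 := h.continuousOn 2
  have c3 := h.continuousOn 3
  rw [integral_eq_sub_of_hasDerivWithinAt_Icc zero_le_one (F := fun t =>
    ζ * (f t * Dv 5 f t - Dv 1 f t * Dv 4 f t + Dv 2 f t * Dv 3 f t)
      - f t * Dv 3 f t + Dv 1 f t * Dv 2 f t) ?_ (by fun_prop)]
  · simp only [h.zero_left, h.Dv1_zero_left, h.Dv2_zero_left, h.Dv3_one_right, h.Dv5_one_right,
      h.Dv2_one_right]
    ring
  intro x hx
  have d (m : ℕ) (hm : m < 6 := by norm_num) := h.hasDerivWithinAt hx m hm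
  refine (((((h.hasDerivWithinAt_self hx).mul (d 5)).sub ((d 1).mul (d 4))).add
    ((d 2).mul (d 3))).const_mul ζ |>.sub ((h.hasDerivWithinAt_self hx).mul (d 3)) |>.add
    ((d 1).mul (d 2))).congr_deriv ?_
  linear_combination -(f x) * h.ode x hx

theorem eqOn_zero_of_integral_sq_eq_zero (h : IsBeamSol ζ μ f) {a b c : ℝ} (ha : 0 < a)
    (hb : 0 ≤ b) (hc : 0 ≤ c)
    (hI : ∫ x in (0:ℝ)..1, (a * Dv 2 f x ^ 2 + b * Dv 3 f x ^ 2 + c * f x ^ 2) = 0) :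
    EqOn f 0 (Icc 0 1) := by
  have c0 := h.contDiffOn.continuousOn
  have c2 := h.continuousOn 2
  have c3 := h.continuousOn 3
  have h2 (y : ℝ) := mul_nonneg ha.le (sq_nonneg (Dv 2 f y))
  have h3 (y : ℝ) := mul_nonneg hb (sq_nonneg (Dv 3 f y))
  have h0 (y : ℝ) := mul_nonneg hc (sq_nonneg (f y))
  refine h.eqOn_zero_of_Dv2 fun x hx => ?_
  have hx0 := eq_zero_of_integral_eq_zero_of_nonneg zero_lt_one (by fun_prop)
    (fun y _ => by linarith [h2 y, h3 y, h0 y]) hI hx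
  have : a * Dv 2 f x ^ 2 = 0 := by linarith [h2 x, h3 x, h0 x]
  exact pow_eq_zero_iff two_ne_zero |>.mp <| (mul_eq_zero.mp this).resolve_left ha.ne'

theorem eigenvalue_pos (h : IsBeamSol ζ μ f) (hζ : 0 ≤ ζ) (hne : ¬ EqOn f 0 (Icc 0 1)) :
    0 < μ := by
  by_contra! hμ
  refine hne (h.eqOn_zero_of_integral_sq_eq_zero one_pos hζ (neg_nonneg.mpr hμ) ?_)
  simpa only [one_mul, neg_mul, ← sub_eq_add_neg] using h.integral_energy

/-- The two sides are the values at `0` and at `1` of a bilinear quantity conserved by the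
equation. -/
theorem boundary_form (hf : IsBeamSol ζ μ f) (hg : IsBeamSol ζ μ g) :
    ζ * (Dv 3 f 0 * Dv 3 g 0) = μ * (f 1 * g 1) - Dv 2 f 1 * Dv 2 g 1 := by
  have hW := integral_eq_sub_of_hasDerivWithinAt_Icc zero_le_one (G := fun _ => 0) (F := fun t =>
    ζ * (Dv 5 f t * Dv 1 g t + Dv 5 g t * Dv 1 f t - Dv 4 f t * Dv 2 g t - Dv 4 g t * Dv 2 f t
      + Dv 3 f t * Dv 3 g t) - (Dv 3 f t * Dv 1 g t + Dv 3 g t * Dv 1 f t)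
      + Dv 2 f t * Dv 2 g t + μ * (f t * g t)) ?_ continuousOn_const
  · simp only [intervalIntegral.integral_zero, hf.zero_left, hf.Dv1_zero_left, hf.Dv2_zero_left,
      hf.Dv3_one_right, hf.Dv5_one_right, hg.zero_left, hg.Dv1_zero_left, hg.Dv2_zero_left,
      hg.Dv3_one_right, hg.Dv5_one_right] at hW
    linear_combination hW + Dv 2 g 1 * hf.Dv2_one_right + Dv 2 f 1 * hg.Dv2_one_right
  intro x hx
  have df (m : ℕ) (hm : m < 6 := by norm_num) := hf.hasDerivWithinAt hx m hm
  have dg (m : ℕ) (hm : m < 6 := by norm_num) := hg.hasDerivWithinAt hx m hm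
  refine (((((df 5).mul (dg 1)).add ((dg 5).mul (df 1))).sub ((df 4).mul (dg 2)) |>.sub
    ((dg 4).mul (df 2)) |>.add ((df 3).mul (dg 3))).const_mul ζ |>.sub
    (((df 3).mul (dg 1)).add ((dg 3).mul (df 1))) |>.add ((df 2).mul (dg 2)) |>.add
    (((hf.hasDerivWithinAt_self hx).mul (hg.hasDerivWithinAt_self hx)).const_mul μ)).congr_deriv ?_
  linear_combination -(Dv 1 g x) * hf.ode x hx - (Dv 1 f x) * hg.ode x hx

/-- Pohozaev identity: multiply the equation by `x f'(x)` and integrate by parts. -/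
theorem integral_pohozaev (hζ : ζ ≠ 0) (h : IsBeamSol ζ μ f) (h1 : f 1 = 0) (h21 : Dv 2 f 1 = 0) :
    ∫ x in (0:ℝ)..1, (3 / 2 * Dv 2 f x ^ 2 + 5 * ζ / 2 * Dv 3 f x ^ 2 + μ / 2 * f x ^ 2) = 0 := by
  have h41 : Dv 4 f 1 = 0 := by
    have := h.Dv2_one_right
    rw [h21, eq_comm] at this
    exact (mul_eq_zero.mp this).resolve_left hζ
  have c0 := h.contDiffOn.continuousOn
  have c2 := h.continuousOn 2
  have c3 := h.continuousOn 3
  rw [integral_eq_sub_of_hasDerivWithinAt_Icc zero_le_one (F := fun t =>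
    ζ * (t * Dv 1 f t * Dv 5 f t - Dv 1 f t * Dv 4 f t - t * Dv 2 f t * Dv 4 f t
      + 2 * (Dv 2 f t * Dv 3 f t) + t * Dv 3 f t * Dv 3 f t / 2)
    - t * Dv 1 f t * Dv 3 f t + Dv 1 f t * Dv 2 f t + t * Dv 2 f t * Dv 2 f t / 2
    + μ * (t * f t * f t) / 2) ?_ (by fun_prop)]
  · simp only [h.zero_left, h.Dv1_zero_left, h.Dv2_zero_left, h.Dv3_one_right, h.Dv5_one_right,
      h1, h21, h41]
    ring
  intro x hx
  have d (m : ℕ) (hm : m < 6 := by norm_num) := h.hasDerivWithinAt hx m hm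
  have d0 := h.hasDerivWithinAt_self hx
  have dx := hasDerivWithinAt_id x (Icc (0:ℝ) 1)
  have hζpart := ((((dx.mul (d 1)).mul (d 5)).sub ((d 1).mul (d 4)))
    |>.sub ((dx.mul (d 2)).mul (d 4)) |>.add (((d 2).mul (d 3)).const_mul 2)
    |>.add (((dx.mul (d 3)).mul (d 3)).div_const 2))
    |>.const_mul ζ
  refine (hζpart.sub ((dx.mul (d 1)).mul (d 3)) |>.add ((d 1).mul (d 2))
    |>.add (((dx.mul (d 2)).mul (d 2)).div_const 2)
    |>.add ((((dx.mul d0).mul d0).const_mul μ).div_const 2)).congr_deriv ?_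
  simp only [Pi.mul_apply, id]
  linear_combination -(x * Dv 1 f x) * h.ode x hx

theorem eqOn_zero_of_Dv3_zero_left_of_zero_right (hζ : 0 < ζ) (hμ : 0 ≤ μ) (h : IsBeamSol ζ μ f)
    (h3 : Dv 3 f 0 = 0) (h1 : f 1 = 0) : EqOn f 0 (Icc 0 1) := by
  have h21 : Dv 2 f 1 = 0 := by
    have := h.boundary_form h
    rw [h3, h1] at this
    exact pow_eq_zero_iff two_ne_zero |>.mp (by linear_combination this)
  exact h.eqOn_zero_of_integral_sq_eq_zero (by norm_num) (by positivity) (by positivity)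
    (h.integral_pohozaev hζ.ne' h1 h21)

theorem Dv3_zero_left_of_ne_zero_right (hζ : ζ ≠ 0) (hμ : μ ≠ 0) (hf : IsBeamSol ζ μ f)
    (hf3 : Dv 3 f 0 = 0) (hf1 : f 1 ≠ 0) (hg : IsBeamSol ζ μ g) : Dv 3 g 0 = 0 := by
  have hff := hf.boundary_form hf
  have hfg := hf.boundary_form hg
  have hgg := hg.boundary_form hg
  rw [hf3] at hff hfg
  have key : (ζ * μ * f 1 ^ 2) * Dv 3 g 0 ^ 2 = 0 := by
    linear_combination μ * f 1 ^ 2 * hgg - (μ * f 1 * g 1 + Dv 2 f 1 * Dv 2 g 1) * hfg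
      + Dv 2 g 1 ^ 2 * hff
  exact pow_eq_zero_iff two_ne_zero |>.mp <|
    (mul_eq_zero.mp key).resolve_left (by simp [hζ, hμ, hf1])

end IsBeamSol

/-- Two eigenfunctions of the beam problem associated with the same eigenvalue
are linearly dependent on `[0,1]`: `φ₁‴(0) φ₂ − φ₂‴(0) φ₁` vanishes identically
on `[0,1]`. Hence every eigenvalue of the beam problem is geometrically simple. -/
theorem stmt_10 (ζ : ℝ) (hζ : 0 < ζ) (μ : ℝ) (φ₁ φ₂ : ℝ → ℝ)
    (h₁ : BeamEigenpair ζ μ φ₁) (h₂ : BeamEigenpair ζ μ φ₂) :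
    ∀ x ∈ Icc (0:ℝ) 1, Dv 3 φ₁ 0 * φ₂ x - Dv 3 φ₂ 0 * φ₁ x = 0 := by
  have S₁ := h₁.isBeamSol hζ.ne'
  have S₂ := h₂.isBeamSol hζ.ne'
  have hμ : 0 < μ := S₁.eigenvalue_pos hζ.le fun h => h₁.2.2.1 fun x hx => h hx
  set ψ := fun t => Dv 3 φ₁ 0 * φ₂ t + -Dv 3 φ₂ 0 * φ₁ t with hψ
  have Sψ : IsBeamSol ζ μ ψ := S₂.linearCombination S₁ _ _
  have hψ3 : Dv 3 ψ 0 = 0 := by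
    rw [hψ, Dv_linearCombination (S₂.contDiffOn.of_le (by norm_num))
      (S₁.contDiffOn.of_le (by norm_num)) _ _ (left_mem_Icc.mpr zero_le_one)]
    ring
  by_cases hψ1 : ψ 1 = 0
  · intro x hx
    simpa [hψ, ← sub_eq_add_neg] using
      Sψ.eqOn_zero_of_Dv3_zero_left_of_zero_right hζ hμ.le hψ3 hψ1 hx
  · have hc₁ := Sψ.Dv3_zero_left_of_ne_zero_right hζ.ne' hμ.ne' hψ3 hψ1 S₁
    have hc₂ := Sψ.Dv3_zero_left_of_ne_zero_right hζ.ne' hμ.ne' hψ3 hψ1 S₂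
    exact absurd (by simp [hψ, hc₁, hc₂]) hψ1
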